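/- Let x | z=0 ~ N(μ₀, σ²) and x | z=1 ~ N(μ₁, σ²) with threshold classifiers accepting iff x ≥ τ_z, and fix δ > 0. If the classifier satisfies Equal Improvability with budget δ (using cost |Δx|), then it satisfies Equal Recourse: E[τ₀ - x | x < τ₀, z=0] = E[τ₁ - x | x < τ₁, z=1]. -/

import Mathlib

/-- Standard normal PDF. -/
noncomputable def stdPdf (x : ℝ) : ℝ := Real.exp (-(x ^ 2) / 2) / Real.sqrt (2 * Real.pi)

/-- Standard normal CDF. -/
noncomputable def stdCdf (x : ℝ) : ℝ := ∫ t in Set.Iic x, stdPdf t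

/-- Gaussian density with mean μ and standard deviation σ. -/
noncomputable def gaussPdf (μ σ x : ℝ) : ℝ :=
  Real.exp (-((x - μ) ^ 2) / (2 * σ ^ 2)) / (σ * Real.sqrt (2 * Real.pi))

/-!
Standardizing by `u = (x - μ) / σ` turns the conditional expected recourse of a group into
`σ · L(a) / Φ(a)` with `a = (τ - μ) / σ` and `L(a) = E[(a - Z)⁺] = a Φ(a) + φ(a)`, so it depends on
the group only through `a`. Equal Improvability says `Φ(a₀ - δ/σ) / Φ(a₀) = Φ(a₁ - δ/σ) / Φ(a₁)`,
and `a ↦ Φ(a - c) / Φ(a)` is strictly increasing for `c > 0` because the inverse Mills ratio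
`φ / Φ = (log Φ)'` is strictly decreasing (its derivative is `-φ L / Φ²`). Hence `a₀ = a₁`.
-/

open MeasureTheory Real Set Filter Topology

lemma stdPdf_pos (x : ℝ) : 0 < stdPdf x :=
  div_pos (exp_pos _) (sqrt_pos.2 (by positivity))

lemma continuous_stdPdf : Continuous stdPdf := by
  unfold stdPdf; fun_prop

lemma integrable_stdPdf : Integrable stdPdf :=
  ((integrable_exp_neg_mul_sq (by norm_num : (0:ℝ) < 1 / 2)).div_const (sqrt (2 * π))).congr
    (.of_forall fun x => by simp only [stdPdf]; ring_nf)

lemma integrable_mul_stdPdf : Integrable (fun x => x * stdPdf x) :=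
  ((integrable_mul_exp_neg_mul_sq (by norm_num : (0:ℝ) < 1 / 2)).div_const
    (sqrt (2 * π))).congr (.of_forall fun x => by simp only [stdPdf]; ring_nf)

lemma hasDerivAt_stdPdf (x : ℝ) : HasDerivAt stdPdf (-x * stdPdf x) x := by
  have h : HasDerivAt (fun y : ℝ => -(y ^ 2) / 2) (-x) x :=
    ((hasDerivAt_pow 2 x).neg.div_const 2).congr_deriv (by ring)
  exact (h.exp.div_const (sqrt (2 * π))).congr_deriv (by unfold stdPdf; ring)

lemma tendsto_stdPdf_atBot : Tendsto stdPdf atBot (𝓝 0) := by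
  have h : Tendsto (fun x : ℝ => -(x ^ 2) / 2) atBot atBot := by
    refine (tendsto_neg_atTop_atBot.comp ?_).atBot_div_const two_pos
    simpa [Function.comp_def] using
      (tendsto_pow_atTop (α := ℝ) two_ne_zero).comp tendsto_neg_atBot_atTop
  have h' := (tendsto_exp_atBot.comp h).div_const (sqrt (2 * π))
  rwa [zero_div] at h'

lemma hasDerivAt_stdCdf (x : ℝ) : HasDerivAt stdCdf (stdPdf x) x := by
  have h := (intervalIntegral.integral_hasDerivAt_right (a := 0) (b := x)
    integrable_stdPdf.intervalIntegrable (continuous_stdPdf.stronglyMeasurableAtFilter _ _)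
    continuous_stdPdf.continuousAt).const_add (stdCdf 0)
  refine h.congr_of_eventuallyEq (.of_forall fun u => ?_)
  have := intervalIntegral.integral_Iic_sub_Iic (integrable_stdPdf.integrableOn (s := Iic 0))
    (integrable_stdPdf.integrableOn (s := Iic u))
  simp only [stdCdf] at this ⊢
  linarith

lemma stdCdf_pos (x : ℝ) : 0 < stdCdf x := by
  rw [stdCdf, setIntegral_pos_iff_support_of_nonneg_ae
    (.of_forall fun t => (stdPdf_pos t).le) integrable_stdPdf.integrableOn]
  simp [Function.support_eq_univ fun t => (stdPdf_pos t).ne']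

lemma integral_Iic_mul_stdPdf (x : ℝ) : ∫ t in Iic x, t * stdPdf t = -stdPdf x := by
  have h := integral_Iic_of_hasDerivAt_of_tendsto' (a := x) (f := fun t => -stdPdf t)
    (fun t _ => (hasDerivAt_stdPdf t).neg.congr_deriv (by ring))
    integrable_mul_stdPdf.integrableOn (by simpa using tendsto_stdPdf_atBot.neg)
  rwa [sub_zero] at h

noncomputable def stdLowerPartialMoment (a : ℝ) : ℝ := ∫ u in Iic a, (a - u) * stdPdf u

lemma stdLowerPartialMoment_eq (a : ℝ) :
    stdLowerPartialMoment a = a * stdCdf a + stdPdf a := by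
  simp only [stdLowerPartialMoment, sub_mul]
  rw [integral_sub (integrable_stdPdf.const_mul a).integrableOn integrable_mul_stdPdf.integrableOn,
    integral_const_mul, integral_Iic_mul_stdPdf, stdCdf, sub_neg_eq_add]

lemma stdLowerPartialMoment_pos (a : ℝ) : 0 < stdLowerPartialMoment a := by
  have hint : IntegrableOn (fun u => (a - u) * stdPdf u) (Iic a) :=
    ((integrable_stdPdf.const_mul a).sub integrable_mul_stdPdf).integrableOn.congr_fun
      (fun u _ => by simp only [Pi.sub_apply]; ring) measurableSet_Iic
  rw [stdLowerPartialMoment, setIntegral_pos_iff_support_of_nonneg_ae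
    ((ae_restrict_iff' measurableSet_Iic).2 (.of_forall fun u hu =>
      mul_nonneg (sub_nonneg.2 hu) (stdPdf_pos u).le)) hint]
  refine lt_of_lt_of_le (by simp) (measure_mono (s := Iio a) fun u (hu : u < a) => ?_)
  exact ⟨mul_ne_zero (sub_ne_zero.2 hu.ne') (stdPdf_pos u).ne', mem_Iic.2 hu.le⟩

lemma strictAnti_stdPdf_div_stdCdf : StrictAnti fun x => stdPdf x / stdCdf x := by
  refine strictAnti_of_hasDerivAt_neg
    (f' := fun x => -(stdPdf x * stdLowerPartialMoment x) / stdCdf x ^ 2) (fun x => ?_) fun x => ?_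
  · refine ((hasDerivAt_stdPdf x).div (hasDerivAt_stdCdf x) (stdCdf_pos x).ne').congr_deriv ?_
    rw [stdLowerPartialMoment_eq]; ring
  · have := mul_pos (stdPdf_pos x) (stdLowerPartialMoment_pos x)
    exact div_neg_of_neg_of_pos (neg_neg_of_pos this) (pow_pos (stdCdf_pos x) 2)

lemma strictMono_stdCdf_sub_div_stdCdf {c : ℝ} (hc : 0 < c) :
    StrictMono fun a => stdCdf (a - c) / stdCdf a := by
  refine strictMono_of_hasDerivAt_pos
    (f' := fun a => (stdPdf (a - c) * stdCdf a - stdCdf (a - c) * stdPdf a) / stdCdf a ^ 2)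
    (fun a => ?_) fun a => ?_
  · exact ((hasDerivAt_stdCdf (a - c)).comp_sub_const a c).div (hasDerivAt_stdCdf a)
      (stdCdf_pos a).ne'
  · have h := strictAnti_stdPdf_div_stdCdf (sub_lt_self a hc)
    rw [div_lt_div_iff₀ (stdCdf_pos a) (stdCdf_pos (a - c))] at h
    exact div_pos (by linarith) (pow_pos (stdCdf_pos a) 2)

lemma gaussPdf_eq_stdPdf {σ : ℝ} (hσ : 0 < σ) (μ x : ℝ) :
    gaussPdf μ σ x = stdPdf ((x - μ) / σ) / σ := by
  rw [gaussPdf, stdPdf, div_div, mul_comm (sqrt _) σ, div_pow]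
  congr 2
  field_simp

lemma setIntegral_Iio_mul_gaussPdf {σ : ℝ} (hσ : 0 < σ) (μ τ : ℝ) (f : ℝ → ℝ) :
    ∫ x in Iio τ, f x * gaussPdf μ σ x = ∫ u in Iio ((τ - μ) / σ), f (μ + σ * u) * stdPdf u := by
  have himage : (fun u => μ + σ * u) '' Iio ((τ - μ) / σ) = Iio τ := by
    ext x
    simp only [mem_image, mem_Iio]
    constructor
    · rintro ⟨u, hu, rfl⟩
      rw [lt_div_iff₀ hσ] at hu
      linarith
    · intro hx
      refine ⟨(x - μ) / σ, div_lt_div_of_pos_right (by linarith) hσ, by field_simp; ring⟩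
  rw [← himage, integral_image_eq_integral_abs_deriv_smul (f := fun u => μ + σ * u)
    (f' := fun _ => σ) measurableSet_Iio
    (fun u _ => (((hasDerivAt_id' u).const_mul σ).const_add μ).hasDerivWithinAt.congr_deriv
      (mul_one σ))
    (fun u _ v _ h => by simpa [hσ.ne'] using h)]
  refine setIntegral_congr_fun measurableSet_Iio fun u _ => ?_
  rw [gaussPdf_eq_stdPdf hσ, add_sub_cancel_left, mul_div_cancel_left₀ u hσ.ne', smul_eq_mul,
    abs_of_pos hσ]
  field_simp

lemma recourse_gaussPdf_eq {σ : ℝ} (hσ : 0 < σ) (μ τ : ℝ) :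
    (∫ x in Iio τ, (τ - x) * gaussPdf μ σ x) / (∫ x in Iio τ, gaussPdf μ σ x)
      = σ * stdLowerPartialMoment ((τ - μ) / σ) / stdCdf ((τ - μ) / σ) := by
  have hden := setIntegral_Iio_mul_gaussPdf hσ μ τ fun _ => 1
  simp only [one_mul] at hden
  have hshift (u : ℝ) : τ - (μ + σ * u) = σ * ((τ - μ) / σ - u) := by field_simp; ring
  rw [setIntegral_Iio_mul_gaussPdf hσ, hden]
  simp only [hshift, mul_assoc, integral_const_mul]
  rw [stdLowerPartialMoment, stdCdf, integral_Iic_eq_integral_Iio, integral_Iic_eq_integral_Iio]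

/-- For Gaussian groups with common variance, Equal Improvability implies Equal Recourse:
the conditional expected recourse E[τ_z - x | x < τ_z, z] is equal for both groups. -/
theorem ei_implies_er (μ₀ μ₁ σ δ τ₀ τ₁ : ℝ) (hσ : 0 < σ) (hδ : 0 < δ)
    (hEI : stdCdf ((τ₀ - δ - μ₀) / σ) / stdCdf ((τ₀ - μ₀) / σ)
         = stdCdf ((τ₁ - δ - μ₁) / σ) / stdCdf ((τ₁ - μ₁) / σ)) :
    (∫ x in Set.Iio τ₀, (τ₀ - x) * gaussPdf μ₀ σ x) / (∫ x in Set.Iio τ₀, gaussPdf μ₀ σ x)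
      = (∫ x in Set.Iio τ₁, (τ₁ - x) * gaussPdf μ₁ σ x) /
        (∫ x in Set.Iio τ₁, gaussPdf μ₁ σ x) := by
  have hshift (τ μ : ℝ) : (τ - δ - μ) / σ = (τ - μ) / σ - δ / σ := by ring
  rw [hshift, hshift] at hEI
  have hthreshold : (τ₀ - μ₀) / σ = (τ₁ - μ₁) / σ :=
    (strictMono_stdCdf_sub_div_stdCdf (div_pos hδ hσ)).injective hEI
  rw [recourse_gaussPdf_eq hσ, recourse_gaussPdf_eq hσ, hthreshold]
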